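/- Let φ: ℝ^k → ℝ^n be a smooth nonconstant map such that φ(x) → c as |x| → ∞ for some constant c ∈ ℝ^n, and such that for all i,j the function x ↦ ∂_iφ(x)·∂_jφ(x) is Lebesgue integrable. Then the average strain matrix M, with entries M_{ij} = ∫_{ℝ^k} ∂_iφ(x)·∂_jφ(x) dx, is symmetric and positive definite. (Positive-definiteness claim in the proof of Proposition 2 of the paper.) -/

import Mathlib

noncomputable section

/-- The `i`-th partial derivative of a scalar function on `ℝ^k`. -/
def pd {k : ℕ} (i : Fin k) (f : (Fin k → ℝ) → ℝ) (x : Fin k → ℝ) : ℝ :=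
  fderiv ℝ f x (Pi.single i 1)

open MeasureTheory Filter

/-- Positive-definiteness claim in the proof of Proposition 2: the average strain matrix of
a nonconstant finite-energy map decaying to a constant at infinity is symmetric positive
definite. -/
theorem stmt11 {k n : ℕ}
    (φ : (Fin k → ℝ) → (Fin n → ℝ)) (hφ : ContDiff ℝ (⊤ : ℕ∞) φ)
    (hnc : ∃ x y : Fin k → ℝ, φ x ≠ φ y)
    (c : Fin n → ℝ)
    (hlim : Filter.Tendsto φ (Filter.cocompact (Fin k → ℝ)) (nhds c))
    (hint : ∀ i j : Fin k, MeasureTheory.Integrable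
      (fun x : Fin k → ℝ => ∑ a, pd i (fun y => φ y a) x * pd j (fun y => φ y a) x))
    (M : Matrix (Fin k) (Fin k) ℝ)
    (hM : ∀ i j : Fin k,
      M i j = ∫ x : Fin k → ℝ, ∑ a, pd i (fun y => φ y a) x * pd j (fun y => φ y a) x) :
    (∀ i j, M i j = M j i)
    ∧ ∀ v : Fin k → ℝ, v ≠ 0 → 0 < ∑ j, ∑ i, v i * M i j * v j := by
  have hφa : ∀ a : Fin n, ContDiff ℝ (⊤ : ℕ∞) (fun y => φ y a) := fun a =>
    (contDiff_apply ℝ ℝ a).comp hφ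
  -- directional derivative formula
  have hdir : ∀ (a : Fin n) (x v : Fin k → ℝ),
      fderiv ℝ (fun y => φ y a) x v = ∑ i, v i * pd i (fun y => φ y a) x := by
    intro a x v
    have hv : v = ∑ i, v i • (Pi.single i (1:ℝ) : Fin k → ℝ) := by
      funext j; simp [Finset.sum_apply, Pi.single_apply]
    conv_lhs => rw [hv]
    rw [map_sum]
    simp [pd, smul_eq_mul]
  constructor
  · intro i j
    rw [hM i j, hM j i]
    congr 1; funext x; exact Finset.sum_congr rfl fun a _ => mul_comm _ _
  intro v hv
  set F : (Fin k → ℝ) → ℝ :=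
    fun x => ∑ a, (fderiv ℝ (fun y => φ y a) x v) ^ 2 with hF
  -- pointwise identity
  have hpt : ∀ x, (∑ j, ∑ i, v i *
      (∑ a, pd i (fun y => φ y a) x * pd j (fun y => φ y a) x) * v j) = F x := by
    intro x
    have : F x = ∑ a, (∑ i, v i * pd i (fun y => φ y a) x) ^ 2 := by
      rw [hF]; exact Finset.sum_congr rfl fun a _ => by rw [hdir]
    rw [this]
    calc (∑ j, ∑ i, v i *
        (∑ a, pd i (fun y => φ y a) x * pd j (fun y => φ y a) x) * v j)
        = ∑ j, ∑ i, ∑ a, (v i * pd i (fun y => φ y a) x)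
            * (v j * pd j (fun y => φ y a) x) := by
          refine Finset.sum_congr rfl fun j _ => Finset.sum_congr rfl fun i _ => ?_
          rw [Finset.mul_sum, Finset.sum_mul]
          exact Finset.sum_congr rfl fun a _ => by ring
      _ = ∑ j, ∑ a, ∑ i, (v i * pd i (fun y => φ y a) x)
            * (v j * pd j (fun y => φ y a) x) :=
          Finset.sum_congr rfl fun j _ => Finset.sum_comm
      _ = ∑ a, ∑ j, ∑ i, (v i * pd i (fun y => φ y a) x)
            * (v j * pd j (fun y => φ y a) x) := Finset.sum_comm
      _ = ∑ a, (∑ i, v i * pd i (fun y => φ y a) x) ^ 2 := by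
          refine Finset.sum_congr rfl fun a _ => ?_
          rw [sq, Finset.sum_mul_sum, Finset.sum_comm]
  -- integrability of F
  have hFint : Integrable F := by
    have hFeq : F = fun x => ∑ j, ∑ i, v i *
        (∑ a, pd i (fun y => φ y a) x * pd j (fun y => φ y a) x) * v j := by
      funext x; rw [hpt]
    rw [hFeq]
    refine integrable_finset_sum _ fun j _ => integrable_finset_sum _ fun i _ => ?_
    exact ((hint i j).const_mul (v i)).mul_const (v j)
  -- the quadratic form equals ∫ F
  have hquad : (∑ j, ∑ i, v i * M i j * v j) = ∫ x, F x := by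
    have h1 : ∀ i j, v i * M i j * v j
        = ∫ x, v i * (∑ a, pd i (fun y => φ y a) x * pd j (fun y => φ y a) x) * v j := by
      intro i j
      rw [hM i j, ← integral_const_mul, ← integral_mul_const]
    calc (∑ j, ∑ i, v i * M i j * v j)
        = ∑ j, ∑ i, ∫ x, v i *
            (∑ a, pd i (fun y => φ y a) x * pd j (fun y => φ y a) x) * v j := by
          simp only [h1]
      _ = ∫ x, ∑ j, ∑ i, v i *
            (∑ a, pd i (fun y => φ y a) x * pd j (fun y => φ y a) x) * v j := by
          rw [integral_finset_sum]
          · exact Finset.sum_congr rfl fun j _ => (integral_finset_sum _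
              fun i _ => ((hint i j).const_mul (v i)).mul_const (v j)).symm
          · exact fun j _ => integrable_finset_sum _ fun i _ =>
              ((hint i j).const_mul (v i)).mul_const (v j)
      _ = ∫ x, F x := by congr 1; funext x; exact hpt x
  rw [hquad]
  -- F is nonneg and continuous
  have hFnn : ∀ x, 0 ≤ F x := fun x => Finset.sum_nonneg fun a _ => sq_nonneg _
  have hFcont : Continuous F := by
    refine continuous_finset_sum _ fun a _ => ?_
    have h1 : Continuous (fun x => fderiv ℝ (fun y => φ y a) x) :=
      (hφa a).continuous_fderiv (by simp)
    exact ((h1.clm_apply continuous_const)).pow 2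
  -- F not identically zero
  have hFne : ∃ x, F x ≠ 0 := by
    by_contra h
    push_neg at h
    -- all directional derivatives along v vanish
    have hzero : ∀ (a : Fin n) (x : Fin k → ℝ), fderiv ℝ (fun y => φ y a) x v = 0 := by
      intro a x
      have h2 := (Finset.sum_eq_zero_iff_of_nonneg (fun b _ => sq_nonneg _)).mp (h x) a
        (Finset.mem_univ a)
      exact pow_eq_zero_iff (two_ne_zero) |>.mp h2
    have hvnorm : (0:ℝ) < ‖v‖ := norm_pos_iff.mpr hv
    -- lines in direction v tend to cocompact
    have hline : ∀ x : Fin k → ℝ, Tendsto (fun t : ℝ => x + t • v) atTop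
        (cocompact (Fin k → ℝ)) := by
      intro x
      rw [← Metric.cobounded_eq_cocompact, ← tendsto_norm_atTop_iff_cobounded]
      refine tendsto_atTop_mono' atTop ?_
        (tendsto_atTop_add_const_right atTop (-‖x‖)
          (tendsto_id.atTop_mul_const hvnorm))
      filter_upwards [eventually_ge_atTop (0:ℝ)] with t ht
      have h3 : ‖t • v‖ ≤ ‖x + t • v‖ + ‖x‖ := by
        calc ‖t • v‖ = ‖(x + t • v) + (-x)‖ := by ring_nf
          _ ≤ ‖x + t • v‖ + ‖(-x)‖ := norm_add_le _ _
          _ = ‖x + t • v‖ + ‖x‖ := by rw [norm_neg]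
      have h4 : ‖t • v‖ = t * ‖v‖ := by
        rw [norm_smul, Real.norm_eq_abs, abs_of_nonneg ht]
      simp only [id_eq]
      linarith
    -- φ is constant, contradiction
    have hconst : ∀ x : Fin k → ℝ, φ x = c := by
      intro x
      funext a
      set g : ℝ → ℝ := fun t => φ (x + t • v) a with hg
      have hgd : ∀ t : ℝ, HasDerivAt g 0 t := by
        intro t
        have hL : HasDerivAt (fun t : ℝ => x + t • v) v t := by
          have := ((hasDerivAt_id t).smul_const v).const_add x
          rwa [one_smul] at this
        have hfd : HasFDerivAt (fun y => φ y a)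
            (fderiv ℝ (fun y => φ y a) (x + t • v)) (x + t • v) :=
          (((hφa a).differentiable (by simp)) (x + t • v)).hasFDerivAt
        have := hfd.comp_hasDerivAt t hL
        rwa [hzero a (x + t • v)] at this
      have hgc : ∀ t : ℝ, g t = g 0 :=
        fun t => is_const_of_deriv_eq_zero (fun s => (hgd s).differentiableAt)
          (fun s => (hgd s).deriv) t 0
      have htend : Tendsto g atTop (nhds (c a)) :=
        ((continuous_apply a).tendsto c).comp (hlim.comp (hline x))
      have htend' : Tendsto g atTop (nhds (g 0)) := by
        have : g = fun _ => g 0 := funext hgc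
        rw [this]; exact tendsto_const_nhds
      have : g 0 = c a := tendsto_nhds_unique htend' htend
      simpa [hg] using this
    obtain ⟨x, y, hxy⟩ := hnc
    exact hxy (by rw [hconst x, hconst y])
  obtain ⟨x0, hx0⟩ := hFne
  rw [integral_pos_iff_support_of_nonneg hFnn hFint]
  have hopen : IsOpen (Function.support F) := by
    have : Function.support F = F ⁻¹' {0}ᶜ := by
      ext x; simp [Function.mem_support]
    rw [this]
    exact (isOpen_compl_singleton).preimage hFcont
  exact hopen.measure_pos volume ⟨x0, hx0⟩
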